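/- For every ε > 0 there exist δ₀ > 0 and s > 0 such that for all δ ∈ (0, δ₀) and all integers L with 1 ≤ L ≤ s·δ^(−2), one has |E(N̂^δ(L)²) / E(N̂⁰(L)²) − 1| < ε; that is, the second moment of the renewal count at parameter δ is well approximated by its value at the critical parameter δ = 0, uniformly for L ≪ δ^(−2). -/

import Mathlib

open MeasureTheory ProbabilityTheory Filter Real
open Nat Finset
set_option maxHeartbeats 1600000

noncomputable section

/-- The mass function of the Catalan distribution with parameter `ρ = 1/2 - δ`:
`P(X = n) = C_n ρ^n (1-ρ)^(n+1)`. -/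
def catMass (ρ : ℝ) (n : ℕ) : ℝ := (catalan n : ℝ) * ρ ^ n * (1 - ρ) ^ (n + 1)

/-- An i.i.d. sequence `(X_i)` with the Catalan distribution of parameter
`ρ = 1/2 - δ` on a probability space. -/
def IIDCat {Ω : Type} [MeasurableSpace Ω] (μ : MeasureTheory.Measure Ω) (δ : ℝ)
    (X : ℕ → Ω → ℕ) : Prop :=
  IsProbabilityMeasure μ ∧ (∀ i, Measurable (X i)) ∧
  iIndepFun X μ ∧
  ∀ i n, μ {ω | X i ω = n} = ENNReal.ofReal (catMass (1/2 - δ) n)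

/-- `N̂(L)`: the number of renewal events in `{1, …, L}` for the renewal process with
a renewal at the origin and inter-arrival times `2 X_i + 1`, i.e. the number of `k ≥ 1`
with `S_k = Σ_{i=1}^k (2 X_i + 1) ≤ L` (indices relabelled from 0). -/
def renCount {Ω : Type} (X : ℕ → Ω → ℕ) (L : ℕ) (ω : Ω) : ℕ :=
  Set.ncard {k : ℕ | 1 ≤ k ∧ ∑ i ∈ Finset.range k, (2 * X i ω + 1) ≤ L}


/-- tail of the critical Catalan distribution -/
def cTail (M : ℕ) : ℝ := (centralBinom M : ℝ) / 4 ^ M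

lemma cb_sq_rec (n : ℕ) : (n+1)^2 * centralBinom (n+1) ^2 = 4 * (2*n+1)^2 * centralBinom n ^2 := by
  have h := Nat.succ_mul_centralBinom_succ n
  calc (n+1)^2 * centralBinom (n+1) ^2 = ((n+1) * centralBinom (n+1))^2 := by ring
    _ = (2*(2*n+1)* centralBinom n)^2 := by rw [h]
    _ = 4 * (2*n+1)^2 * centralBinom n ^2 := by ring

lemma cb_sq_upper (n : ℕ) : centralBinom n ^ 2 * (2*n+1) ≤ 16 ^ n := by
  induction n with
  | zero => simp [centralBinom_zero]
  | succ n ih =>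
    have h := cb_sq_rec n
    have key : (n+1)^2 * (centralBinom (n+1)^2 * (2*(n+1)+1)) ≤ (n+1)^2 * 16^(n+1) := by
      calc (n+1)^2 * (centralBinom (n+1)^2 * (2*(n+1)+1))
          = (4 * (2*n+1)^2 * centralBinom n ^2) * (2*n+3) := by rw [← mul_assoc, h]; ring
        _ = (4 * (2*n+1) * (2*n+3)) * (centralBinom n^2 * (2*n+1)) := by ring
        _ ≤ (16 * (n+1)^2) * 16^n := by
            apply Nat.mul_le_mul _ ih
            nlinarith
        _ = (n+1)^2 * 16^(n+1) := by ring
    exact Nat.le_of_mul_le_mul_left key (pow_pos (Nat.succ_pos n) 2)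

lemma cb_sq_lower (n : ℕ) (hn : 1 ≤ n) : 16 ^ n ≤ 4 * n * centralBinom n ^ 2 := by
  induction n with
  | zero => omega
  | succ n ih =>
    rcases Nat.eq_zero_or_pos n with h0 | h0
    · subst h0; simp [centralBinom]
    · have ih' := ih h0
      have h := cb_sq_rec n
      have key : (n+1)^2 * 16^(n+1) ≤ (n+1)^2 * (4*(n+1)*centralBinom (n+1)^2) := by
        calc (n+1)^2 * 16^(n+1) = 16*(n+1)^2 * 16^n := by ring
          _ ≤ 16*(n+1)^2 * (4*n*centralBinom n^2) := Nat.mul_le_mul_left _ ih'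
          _ ≤ 4*(n+1)*(4*(2*n+1)^2*centralBinom n^2) := by nlinarith [sq_nonneg (centralBinom n)]
          _ = (n+1)^2 * (4*(n+1)*centralBinom (n+1)^2) := by rw [← h]; ring
      exact Nat.le_of_mul_le_mul_left key (pow_pos (Nat.succ_pos n) 2)

lemma cTail_pos (M : ℕ) : 0 < cTail M := by
  unfold cTail
  have := Nat.centralBinom_pos M
  positivity

lemma pow16 (M : ℕ) : ((4:ℝ)^M)^2 = 16^M := by
  rw [← pow_mul, show (16:ℝ) = 4^2 by norm_num, ← pow_mul, mul_comm]

lemma cTail_sq (M : ℕ) : cTail M ^ 2 = (centralBinom M : ℝ)^2 / 16 ^ M := by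
  unfold cTail; rw [div_pow, pow16]

lemma cTail_sq_mul_le (M : ℕ) : cTail M ^ 2 * (2*M+1) ≤ 1 := by
  have h : ((centralBinom M : ℝ)^2 * (2*M+1)) ≤ 16^M := by exact_mod_cast cb_sq_upper M
  have h16 : (0:ℝ) < 16 ^ M := by positivity
  rw [cTail_sq, div_mul_eq_mul_div, div_le_one h16]
  exact h

lemma one_le_cTail_sq_mul (M : ℕ) (hM : 1 ≤ M) : 1 ≤ cTail M ^ 2 * (4*M) := by
  have h : (16:ℝ)^M ≤ 4*M*(centralBinom M:ℝ)^2 := by exact_mod_cast cb_sq_lower M hM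
  have h16 : (0:ℝ) < 16 ^ M := by positivity
  rw [cTail_sq, div_mul_eq_mul_div, le_div_iff₀ h16, one_mul]
  nlinarith

lemma cTail_mul_sqrt_le (M : ℕ) : cTail M * Real.sqrt M ≤ 1 := by
  have h := cTail_sq_mul_le M
  have hs : Real.sqrt M ^ 2 = M := Real.sq_sqrt (Nat.cast_nonneg M)
  have h1 : (cTail M * Real.sqrt M)^2 ≤ 1 := by
    rw [mul_pow, hs]; nlinarith [sq_nonneg (cTail M), Nat.cast_nonneg (α := ℝ) M]
  nlinarith [mul_nonneg (cTail_pos M).le (Real.sqrt_nonneg (M:ℝ))]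

lemma one_le_two_cTail_mul_sqrt (L : ℕ) (hL : 1 ≤ L) : 1 ≤ 2 * cTail L * Real.sqrt L := by
  have h := one_le_cTail_sq_mul L hL
  have hs : Real.sqrt L ^ 2 = L := Real.sq_sqrt (Nat.cast_nonneg L)
  have h1 : 1 ≤ (2 * cTail L * Real.sqrt L)^2 := by
    rw [mul_pow, mul_pow, hs]; nlinarith
  nlinarith [mul_nonneg (mul_nonneg (by norm_num : (0:ℝ) ≤ 2) (cTail_pos L).le) (Real.sqrt_nonneg (L:ℝ))]

lemma cTail_le_one (M : ℕ) : cTail M ≤ 1 := by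
  have h := cTail_mul_sqrt_le M
  rcases Nat.eq_zero_or_pos M with h0 | h0
  · subst h0; unfold cTail; simp [centralBinom_zero]
  · have hs : 1 ≤ Real.sqrt M := by
      rw [show (1:ℝ) = Real.sqrt 1 by simp]
      exact Real.sqrt_le_sqrt (by exact_mod_cast h0)
    nlinarith [(cTail_pos M).le]

lemma catMass_crit_mul (n : ℕ) :
    catMass (1/2) n * (2*((n:ℝ)+1)) * 4^n = centralBinom n := by
  have hc : ((n:ℝ)+1) * (catalan n : ℝ) = centralBinom n := by
    exact_mod_cast congrArg (Nat.cast : ℕ → ℝ) (succ_mul_catalan_eq_centralBinom n)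
  have h2n : ((1:ℝ)/2)^n * (1/2)^(n+1) * 4^n = 1/2 := by
    calc ((1:ℝ)/2)^n * (1/2)^(n+1) * 4^n = ((1/2)*(1/2)*4)^n * (1/2) := by
          rw [pow_succ, mul_pow, mul_pow]; ring
      _ = 1/2 := by norm_num
  unfold catMass
  rw [show (1:ℝ)-1/2 = 1/2 by norm_num]
  calc (catalan n:ℝ) * (1/2)^n * (1/2)^(n+1) * (2*((n:ℝ)+1)) * 4^n
      = (((n:ℝ)+1) * catalan n) * (((1/2)^n * (1/2)^(n+1) * 4^n) * 2) := by ring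
    _ = (centralBinom n : ℝ) * ((1/2) * 2) := by rw [hc, h2n]
    _ = centralBinom n := by ring

lemma catMass_crit (n : ℕ) : catMass (1/2) n = cTail n / (2*((n:ℝ)+1)) := by
  have h := catMass_crit_mul n
  have h4 : (0:ℝ) < 4^n := by positivity
  have hn : (0:ℝ) < 2*((n:ℝ)+1) := by positivity
  unfold cTail
  rw [div_div, eq_div_iff (by positivity)]
  calc catMass (1/2) n * (4^n * (2*((n:ℝ)+1)))
      = catMass (1/2) n * (2*((n:ℝ)+1)) * 4^n := by ring
    _ = centralBinom n := h

lemma catMass_crit_nonneg (n : ℕ) : 0 ≤ catMass (1/2) n := by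
  rw [catMass_crit]
  have := (cTail_pos n).le
  positivity

lemma catMass_crit_eq_tail_sub (M : ℕ) : catMass (1/2) M = cTail M - cTail (M+1) := by
  have hr : ((M:ℝ)+1) * (centralBinom (M+1) : ℝ) = 2*(2*M+1) * centralBinom M := by
    exact_mod_cast congrArg (Nat.cast : ℕ → ℝ) (Nat.succ_mul_centralBinom_succ M)
  have hM1 : ((M:ℝ)+1) ≠ 0 := by positivity
  have hb : (centralBinom (M+1):ℝ) = 2*(2*M+1)*centralBinom M/((M:ℝ)+1) := by
    rw [eq_div_iff hM1]; linarith [hr]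
  rw [catMass_crit]
  unfold cTail
  rw [hb, pow_succ]
  push_cast
  have h4 : ((4:ℝ)^M) ≠ 0 := by positivity
  field_simp
  ring

lemma sum_catMass_crit (M : ℕ) : ∑ n ∈ Finset.range M, catMass (1/2) n = 1 - cTail M := by
  induction M with
  | zero => simp [cTail, centralBinom_zero]
  | succ M ih =>
    rw [Finset.sum_range_succ, ih, catMass_crit_eq_tail_sub]; ring

lemma catMass_ratio (δ : ℝ) (n : ℕ) :
    catMass (1/2 - δ) n = (1+2*δ) * (1-4*δ^2)^n * catMass (1/2) n := by
  unfold catMass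
  have h1 : (1:ℝ) - (1/2 - δ) = 1/2 + δ := by ring
  have h2 : (1:ℝ) - 1/2 = 1/2 := by norm_num
  rw [h1, h2]
  have key : ((1:ℝ)/2 - δ)^n * (1/2+δ)^(n+1) =
      (1+2*δ) * (1-4*δ^2)^n * ((1/2)^n * (1/2)^(n+1)) := by
    have e1 : ((1:ℝ)-4*δ^2) * ((1/2) * (1/2)) = (1/2-δ) * (1/2+δ) := by ring
    calc ((1:ℝ)/2 - δ)^n * (1/2+δ)^(n+1)
        = ((1/2-δ) * (1/2+δ))^n * (1/2+δ) := by rw [mul_pow, pow_succ]; ring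
      _ = ((1-4*δ^2) * ((1/2)*(1/2)))^n * (1/2+δ) := by rw [e1]
      _ = (1-4*δ^2)^n * ((1/2)^n * (1/2)^n) * (1/2+δ) := by rw [mul_pow, mul_pow]
      _ = (1+2*δ) * (1-4*δ^2)^n * ((1/2)^n * (1/2)^(n+1)) := by rw [pow_succ]; ring
  calc (catalan n : ℝ) * (1/2-δ)^n * (1/2+δ)^(n+1)
      = (catalan n : ℝ) * ((1/2-δ)^n * (1/2+δ)^(n+1)) := by ring
    _ = (catalan n : ℝ) * ((1+2*δ) * (1-4*δ^2)^n * ((1/2)^n * (1/2)^(n+1))) := by rw [key]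
    _ = (1+2*δ)*(1-4*δ^2)^n*((catalan n:ℝ) * (1/2)^n * (1/2)^(n+1)) := by ring

lemma catMass_nonneg {ρ : ℝ} (h0 : 0 ≤ ρ) (h1 : ρ ≤ 1) (n : ℕ) : 0 ≤ catMass ρ n := by
  unfold catMass
  have : (0:ℝ) ≤ 1 - ρ := by linarith
  positivity

lemma catMass_crit_zero : catMass (1/2) 0 = 1/2 := by
  unfold catMass; norm_num

lemma sum_one_div_sqrt (M : ℕ) : ∑ n ∈ Finset.range M, 1 / Real.sqrt n ≤ 2 * Real.sqrt M := by
  have key : ∀ M : ℕ, ∑ n ∈ Finset.range (M+1), 1 / Real.sqrt n ≤ 2 * Real.sqrt M := by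
    intro M
    induction M with
    | zero => simp
    | succ M ih =>
      rw [Finset.sum_range_succ]
      have hcast : (((M+1:ℕ)):ℝ) = (M:ℝ)+1 := by push_cast; ring
      have ha : Real.sqrt ((M:ℝ)+1) ^ 2 = (M:ℝ)+1 := Real.sq_sqrt (by positivity)
      have hb : Real.sqrt M ^ 2 = (M:ℝ) := Real.sq_sqrt (Nat.cast_nonneg M)
      have hap : 0 < Real.sqrt ((M:ℝ)+1) := Real.sqrt_pos.2 (by positivity)
      have hstep : 1 / Real.sqrt ((M:ℝ)+1) ≤ 2 * Real.sqrt ((M:ℝ)+1) - 2 * Real.sqrt M := by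
        rw [div_le_iff₀ hap]
        nlinarith [Real.sqrt_nonneg ((M:ℝ)+1), Real.sqrt_nonneg (M:ℝ),
          sq_nonneg (Real.sqrt ((M:ℝ)+1) - Real.sqrt (M:ℝ))]
      rw [hcast]
      linarith [ih]
  rcases Nat.eq_zero_or_pos M with h0 | h0
  · subst h0; simp
  · obtain ⟨M', rfl⟩ := Nat.exists_eq_succ_of_ne_zero (Nat.pos_iff_ne_zero.1 h0)
    refine (key M').trans ?_
    have hm : Real.sqrt M' ≤ Real.sqrt (M'.succ:ℕ) := Real.sqrt_le_sqrt (by push_cast; linarith)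
    linarith

lemma sum_mul_catMass_crit (M : ℕ) :
    ∑ n ∈ Finset.range M, (n:ℝ) * catMass (1/2) n ≤ Real.sqrt M := by
  have term : ∀ n : ℕ, (n:ℝ) * catMass (1/2) n ≤ (1/2) * (1/Real.sqrt n) := by
    intro n
    rcases Nat.eq_zero_or_pos n with h0 | h0
    · subst h0; simp
    · rw [catMass_crit]
      have hTn : cTail n * Real.sqrt n ≤ 1 := cTail_mul_sqrt_le n
      have hsp : 0 < Real.sqrt n := Real.sqrt_pos.2 (by exact_mod_cast h0)
      have hT : cTail n ≤ 1 / Real.sqrt n := by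
        rw [le_div_iff₀ hsp]; exact hTn
      have hTpos := (cTail_pos n).le
      have h1 : (n:ℝ) * (cTail n / (2*((n:ℝ)+1))) ≤ cTail n / 2 := by
        rw [show (n:ℝ) * (cTail n / (2*((n:ℝ)+1))) = (n:ℝ) * cTail n / (2*((n:ℝ)+1)) by ring,
          div_le_div_iff₀ (by positivity) (by norm_num)]
        nlinarith [Nat.cast_nonneg (α := ℝ) n]
      calc (n:ℝ) * (cTail n / (2*((n:ℝ)+1))) ≤ cTail n / 2 := h1
        _ ≤ (1/Real.sqrt n)/2 := by linarith
        _ = (1/2) * (1/Real.sqrt n) := by ring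
  calc ∑ n ∈ Finset.range M, (n:ℝ) * catMass (1/2) n
      ≤ ∑ n ∈ Finset.range M, (1/2) * (1/Real.sqrt n) := Finset.sum_le_sum (fun n _ => term n)
    _ = (1/2) * ∑ n ∈ Finset.range M, 1/Real.sqrt n := by rw [Finset.mul_sum]
    _ ≤ (1/2) * (2 * Real.sqrt M) := by
        apply mul_le_mul_of_nonneg_left (sum_one_div_sqrt M) (by norm_num)
    _ = Real.sqrt M := by ring


/-- the set of renewal trajectories of length `k` staying within `L` -/
noncomputable def tupSet (k L : ℕ) : Finset (Fin k → ℕ) :=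
  (Fintype.piFinset fun _ => Finset.range L).filter (fun x => ∑ i, (2 * x i + 1) ≤ L)

/-- `P(S_k ≤ L)` as a finite sum -/
noncomputable def Pd (δ : ℝ) (k L : ℕ) : ℝ :=
  ∑ x ∈ tupSet k L, ∏ i, catMass (1/2 - δ) (x i)

lemma prod_ratio (δ : ℝ) (k : ℕ) (x : Fin k → ℕ) :
    ∏ i, catMass (1/2 - δ) (x i) =
      (1+2*δ)^k * (1-4*δ^2)^(∑ i, x i) * ∏ i, catMass (1/2) (x i) := by
  calc ∏ i, catMass (1/2 - δ) (x i)
      = ∏ i, ((1+2*δ) * (1-4*δ^2)^(x i) * catMass (1/2) (x i)) := by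
        exact Finset.prod_congr rfl (fun i _ => catMass_ratio δ (x i))
    _ = (∏ _i : Fin k, (1+2*δ)) * (∏ i, (1-4*δ^2)^(x i)) * ∏ i, catMass (1/2) (x i) := by
        rw [← Finset.prod_mul_distrib, ← Finset.prod_mul_distrib]
    _ = (1+2*δ)^k * (1-4*δ^2)^(∑ i, x i) * ∏ i, catMass (1/2) (x i) := by
        rw [Finset.prod_const, Finset.card_univ, Fintype.card_fin,
          Finset.prod_pow_eq_pow_sum]

lemma Pd_nonneg {δ : ℝ} (h0 : 0 ≤ δ) (h1 : δ < 1/2) (k L : ℕ) : 0 ≤ Pd δ k L := by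
  apply Finset.sum_nonneg
  intro x _
  apply Finset.prod_nonneg
  intro i _
  exact catMass_nonneg (by linarith) (by linarith) _

lemma Pd_zero_nonneg (k L : ℕ) : 0 ≤ Pd 0 k L := Pd_nonneg le_rfl (by norm_num) k L

lemma Pd_le (δ : ℝ) (h0 : 0 ≤ δ) (h1 : δ < 1/2) (k L : ℕ) :
    Pd δ k L ≤ (1+2*δ)^k * Pd 0 k L := by
  unfold Pd
  rw [Finset.mul_sum]
  apply Finset.sum_le_sum
  intro x hx
  rw [prod_ratio, show (1:ℝ)/2 - 0 = 1/2 by norm_num]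
  have hp : 0 ≤ ∏ i, catMass (1/2) (x i) :=
    Finset.prod_nonneg (fun i _ => catMass_crit_nonneg _)
  have h4 : (0:ℝ) ≤ 1 - 4*δ^2 := by nlinarith
  have h4' : (1-4*δ^2)^(∑ i, x i) ≤ 1 := pow_le_one₀ h4 (by nlinarith)
  have hδk : (0:ℝ) ≤ (1+2*δ)^k := by positivity
  calc (1+2*δ)^k * (1-4*δ^2)^(∑ i, x i) * ∏ i, catMass (1/2) (x i)
      ≤ (1+2*δ)^k * 1 * ∏ i, catMass (1/2) (x i) := by
        apply mul_le_mul_of_nonneg_right _ hp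
        apply mul_le_mul_of_nonneg_left h4' hδk
    _ = (1+2*δ)^k * ∏ i, catMass (1/2) (x i) := by ring

lemma tupSet_sum_le {k L : ℕ} {x : Fin k → ℕ} (hx : x ∈ tupSet k L) : ∑ i, x i ≤ L := by
  have h := (Finset.mem_filter.1 hx).2
  calc ∑ i, x i ≤ ∑ i, (2 * x i + 1) := Finset.sum_le_sum (fun i _ => by omega)
    _ ≤ L := h

lemma Pd_ge (δ : ℝ) (h0 : 0 ≤ δ) (h1 : δ < 1/2) (k L : ℕ) :
    (1-4*δ^2)^L * Pd 0 k L ≤ Pd δ k L := by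
  unfold Pd
  rw [Finset.mul_sum]
  apply Finset.sum_le_sum
  intro x hx
  rw [prod_ratio δ k x, prod_ratio 0 k x]
  norm_num
  have hp : 0 ≤ ∏ i, catMass (1/2) (x i) :=
    Finset.prod_nonneg (fun i _ => catMass_crit_nonneg _)
  have h4 : (0:ℝ) ≤ 1 - 4*δ^2 := by nlinarith
  have h4le : (1-4*δ^2) ≤ 1 := by nlinarith
  have hmono : (1-4*δ^2)^L ≤ (1-4*δ^2)^(∑ i, x i) :=
    pow_le_pow_of_le_one h4 h4le (tupSet_sum_le hx)
  have hδk : (1:ℝ) ≤ (1+2*δ)^k := one_le_pow₀ (by linarith)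
  have hpow4 : (0:ℝ) ≤ (1-4*δ^2)^(∑ i, x i) := pow_nonneg h4 _
  calc (1-4*δ^2)^L * ∏ i, catMass (1/2) (x i)
      ≤ (1-4*δ^2)^(∑ i, x i) * ((1+2*δ)^k * ∏ i, catMass (1/2) (x i)) := by
        have h1 : ∏ i, catMass (1/2) (x i) ≤ (1+2*δ)^k * ∏ i, catMass (1/2) (x i) := by
          nlinarith
        apply mul_le_mul hmono h1 hp hpow4
    _ = (1+2*δ)^k * (1-4*δ^2)^(∑ i, x i) * ∏ i, catMass (1/2) (x i) := by ring

lemma Pd_crit_le (k L : ℕ) : Pd 0 k L ≤ (1 - cTail L)^k := by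
  unfold Pd tupSet
  rw [show (1:ℝ)/2 - 0 = 1/2 by norm_num]
  calc ∑ x ∈ (Fintype.piFinset fun _ : Fin k => Finset.range L).filter
        (fun x => ∑ i, (2 * x i + 1) ≤ L), ∏ i, catMass (1/2) (x i)
      ≤ ∑ x ∈ Fintype.piFinset (fun _ : Fin k => Finset.range L), ∏ i, catMass (1/2) (x i) := by
        apply Finset.sum_le_sum_of_subset_of_nonneg (Finset.filter_subset _ _)
        intro x _ _
        exact Finset.prod_nonneg (fun i _ => catMass_crit_nonneg _)
    _ = ∏ _i : Fin k, ∑ n ∈ Finset.range L, catMass (1/2) n := (Finset.prod_univ_sum _ _).symm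
    _ = (1 - cTail L)^k := by rw [sum_catMass_crit, Finset.prod_const, Finset.card_univ,
          Fintype.card_fin]

lemma Pd_one_ge (L : ℕ) (hL : 1 ≤ L) : 1/2 ≤ Pd 0 1 L := by
  unfold Pd
  rw [show (1:ℝ)/2 - 0 = 1/2 by norm_num]
  have hmem : (fun _ : Fin 1 => 0) ∈ tupSet 1 L := by
    unfold tupSet
    rw [Finset.mem_filter]
    constructor
    · rw [Fintype.mem_piFinset]
      intro i; exact Finset.mem_range.2 hL
    · simpa using hL
  have := Finset.single_le_sum (f := fun x : Fin 1 → ℕ => ∏ i, catMass (1/2) (x i))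
    (fun x _ => Finset.prod_nonneg (fun i _ => catMass_crit_nonneg _)) hmem
  calc (1:ℝ)/2 = ∏ _i : Fin 1, catMass (1/2) 0 := by
        rw [Finset.prod_const, Finset.card_univ, Fintype.card_fin, pow_one, catMass_crit_zero]
    _ ≤ _ := this

-- exchange lemma
lemma sum_box_weighted (k L : ℕ) (i : Fin k) :
    ∑ x ∈ Fintype.piFinset (fun _ : Fin k => Finset.range L), (x i : ℝ) * ∏ j, catMass (1/2) (x j)
    = (∑ n ∈ Finset.range L, (n:ℝ) * catMass (1/2) n) *
        (∑ n ∈ Finset.range L, catMass (1/2) n)^(k-1) := by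
  have hps := Finset.prod_univ_sum (κ := fun _ : Fin k => ℕ) (fun _ => Finset.range L)
    (fun j n => if j = i then (n:ℝ) * catMass (1/2) n else catMass (1/2) n)
  have h1 : ∀ x : Fin k → ℕ,
      (∏ j, (if j = i then (x j:ℝ) * catMass (1/2) (x j) else catMass (1/2) (x j)))
      = (x i : ℝ) * ∏ j, catMass (1/2) (x j) := by
    intro x
    rw [← Finset.mul_prod_erase Finset.univ _ (Finset.mem_univ i),
        ← Finset.mul_prod_erase Finset.univ (fun j => catMass (1/2) (x j)) (Finset.mem_univ i)]
    rw [if_pos rfl]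
    rw [Finset.prod_congr rfl (fun j hj => if_neg (Finset.ne_of_mem_erase hj))]
    ring
  have h2 : (∏ j : Fin k, ∑ n ∈ Finset.range L,
      (if j = i then (n:ℝ) * catMass (1/2) n else catMass (1/2) n))
      = (∑ n ∈ Finset.range L, (n:ℝ) * catMass (1/2) n) *
        (∑ n ∈ Finset.range L, catMass (1/2) n)^(k-1) := by
    rw [← Finset.mul_prod_erase Finset.univ _ (Finset.mem_univ i)]
    simp only [if_pos rfl]
    congr 1
    rw [Finset.prod_congr rfl (fun j hj => ?_), Finset.prod_const,
      Finset.card_erase_of_mem (Finset.mem_univ i), Finset.card_univ, Fintype.card_fin]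
    exact Finset.sum_congr rfl (fun n _ => if_neg (Finset.ne_of_mem_erase hj))
  calc ∑ x ∈ Fintype.piFinset (fun _ : Fin k => Finset.range L),
        (x i : ℝ) * ∏ j, catMass (1/2) (x j)
      = ∑ x ∈ Fintype.piFinset (fun _ : Fin k => Finset.range L),
        ∏ j, (if j = i then (x j:ℝ) * catMass (1/2) (x j) else catMass (1/2) (x j)) :=
        Finset.sum_congr rfl (fun x _ => (h1 x).symm)
    _ = ∏ j : Fin k, ∑ n ∈ Finset.range L,
        (if j = i then (n:ℝ) * catMass (1/2) n else catMass (1/2) n) := hps.symm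
    _ = _ := h2

/-- Markov-type lower bound -/
lemma Pd_crit_ge (k L : ℕ) (hk : 1 ≤ k) (hkL : 2*k ≤ L) :
    1 - k * cTail L - 4*k/Real.sqrt L ≤ Pd 0 k L := by
  have hL1 : 1 ≤ L := by omega
  have hsL : (0:ℝ) < Real.sqrt L := Real.sqrt_pos.2 (by exact_mod_cast hL1)
  have hsq : Real.sqrt L * Real.sqrt L = (L:ℝ) := Real.mul_self_sqrt (Nat.cast_nonneg L)
  set box := Fintype.piFinset (fun _ : Fin k => Finset.range L) with hbox
  have hTnonneg : ∀ x : Fin k → ℕ, 0 ≤ ∏ j, catMass (1/2) (x j) :=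
    fun x => Finset.prod_nonneg (fun j _ => catMass_crit_nonneg _)
  -- total mass of the box
  have hboxsum : ∑ x ∈ box, ∏ j, catMass (1/2) (x j) = (1 - cTail L)^k := by
    rw [hbox, ← Finset.prod_univ_sum]
    rw [sum_catMass_crit, Finset.prod_const, Finset.card_univ, Fintype.card_fin]
  -- split
  have hsplit : ∑ x ∈ box, ∏ j, catMass (1/2) (x j)
      = Pd 0 k L + ∑ x ∈ box.filter (fun x => ¬ (∑ i, (2 * x i + 1) ≤ L)),
          ∏ j, catMass (1/2) (x j) := by
    rw [show Pd 0 k L = ∑ x ∈ box.filter (fun x => ∑ i, (2 * x i + 1) ≤ L),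
        ∏ j, catMass (1/2) (x j) by
      unfold Pd tupSet
      rw [show (1:ℝ)/2 - 0 = 1/2 by norm_num]]
    exact (Finset.sum_filter_add_sum_filter_not box _ _).symm
  -- bad part bound
  have hbad : ∑ x ∈ box.filter (fun x => ¬ (∑ i, (2 * x i + 1) ≤ L)),
      ∏ j, catMass (1/2) (x j) ≤ 4*k/Real.sqrt L := by
    have hLk : (0:ℝ) < (L:ℝ) - k := by
      have : (k:ℝ) < L := by exact_mod_cast Nat.lt_of_lt_of_le (by omega) hkL
      linarith
    have step1 : ∀ x ∈ box.filter (fun x => ¬ (∑ i, (2 * x i + 1) ≤ L)),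
        ∏ j, catMass (1/2) (x j) ≤ (2/((L:ℝ)-k)) * ((∑ i, (x i:ℝ)) * ∏ j, catMass (1/2) (x j)) := by
      intro x hx
      have hxbad : ¬ (∑ i, (2 * x i + 1) ≤ L) := (Finset.mem_filter.1 hx).2
      have hxsum : (L:ℝ) - k < 2 * ∑ i, (x i:ℝ) := by
        have h1 : L < ∑ i, (2 * x i + 1) := Nat.lt_of_not_le hxbad
        have h2 : (∑ i : Fin k, (2 * x i + 1) : ℕ) = 2 * (∑ i, x i) + k := by
          rw [Finset.sum_add_distrib, ← Finset.mul_sum, Finset.sum_const, Finset.card_univ,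
            Fintype.card_fin, smul_eq_mul, mul_one]
        have h3 : (L:ℝ) < 2 * (∑ i, (x i:ℝ)) + k := by
          have := h1; rw [h2] at this
          have : (L:ℝ) < 2 * ((∑ i, x i : ℕ):ℝ) + k := by exact_mod_cast this
          rw [Nat.cast_sum] at this
          exact this
        linarith
      have hw := hTnonneg x
      have hfac : 1 ≤ (2/((L:ℝ)-k)) * (∑ i, (x i:ℝ)) := by
        rw [div_mul_eq_mul_div, le_div_iff₀ hLk]
        linarith
      nlinarith [Finset.sum_nonneg (fun i (_ : i ∈ Finset.univ) => (Nat.cast_nonneg (α := ℝ) (x i)))]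
    calc ∑ x ∈ box.filter (fun x => ¬ (∑ i, (2 * x i + 1) ≤ L)), ∏ j, catMass (1/2) (x j)
        ≤ ∑ x ∈ box.filter (fun x => ¬ (∑ i, (2 * x i + 1) ≤ L)),
            (2/((L:ℝ)-k)) * ((∑ i, (x i:ℝ)) * ∏ j, catMass (1/2) (x j)) :=
          Finset.sum_le_sum step1
      _ ≤ ∑ x ∈ box, (2/((L:ℝ)-k)) * ((∑ i, (x i:ℝ)) * ∏ j, catMass (1/2) (x j)) := by
          apply Finset.sum_le_sum_of_subset_of_nonneg (Finset.filter_subset _ _)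
          intro x _ _
          have := hTnonneg x
          have hs0 : (0:ℝ) ≤ ∑ i, (x i:ℝ) :=
            Finset.sum_nonneg (fun i _ => Nat.cast_nonneg _)
          positivity
      _ = (2/((L:ℝ)-k)) * ∑ x ∈ box, (∑ i, (x i:ℝ)) * ∏ j, catMass (1/2) (x j) := by
          rw [Finset.mul_sum]
      _ ≤ (2/((L:ℝ)-k)) * (k * Real.sqrt L) := by
          apply mul_le_mul_of_nonneg_left _ (by positivity)
          have hswap : ∑ x ∈ box, (∑ i, (x i:ℝ)) * ∏ j, catMass (1/2) (x j)
              = ∑ i : Fin k, ∑ x ∈ box, (x i:ℝ) * ∏ j, catMass (1/2) (x j) := by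
            rw [Finset.sum_comm]
            exact Finset.sum_congr rfl (fun x _ => by rw [Finset.sum_mul])
          rw [hswap]
          have hterm : ∀ i : Fin k, ∑ x ∈ box, (x i:ℝ) * ∏ j, catMass (1/2) (x j)
              ≤ Real.sqrt L := by
            intro i
            rw [hbox, sum_box_weighted k L i]
            have h1 := sum_mul_catMass_crit L
            have h2 : (∑ n ∈ Finset.range L, catMass (1/2) n)^(k-1) ≤ 1 := by
              rw [sum_catMass_crit]
              apply pow_le_one₀ (by linarith [cTail_le_one L]) (by linarith [(cTail_pos L).le])
            have h3 : 0 ≤ ∑ n ∈ Finset.range L, (n:ℝ) * catMass (1/2) n :=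
              Finset.sum_nonneg (fun n _ => mul_nonneg (Nat.cast_nonneg n) (catMass_crit_nonneg n))
            nlinarith [Real.sqrt_nonneg (L:ℝ)]
          calc ∑ i : Fin k, ∑ x ∈ box, (x i:ℝ) * ∏ j, catMass (1/2) (x j)
              ≤ ∑ _i : Fin k, Real.sqrt L := Finset.sum_le_sum (fun i _ => hterm i)
            _ = k * Real.sqrt L := by
                rw [Finset.sum_const, Finset.card_univ, Fintype.card_fin, nsmul_eq_mul]
      _ ≤ 4*k/Real.sqrt L := by
          have hLk2 : (L:ℝ)/2 ≤ (L:ℝ) - k := by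
            have : (2*k:ℝ) ≤ L := by exact_mod_cast hkL
            linarith
        -- (2/(L-k)) * k√L ≤ (4/L) k√L = 4k/√L
          have hL0 : (0:ℝ) < L := by exact_mod_cast hL1
          have h1 : 2/((L:ℝ)-k) ≤ 4/(L:ℝ) := by
            rw [div_le_div_iff₀ (by linarith) hL0]
            linarith
          have hknn : (0:ℝ) ≤ k := Nat.cast_nonneg k
          calc (2/((L:ℝ)-k)) * (k * Real.sqrt L) ≤ (4/(L:ℝ)) * (k * Real.sqrt L) := by
                apply mul_le_mul_of_nonneg_right h1 (by positivity)
            _ = 4*k/Real.sqrt L := by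
                rw [div_mul_eq_mul_div, eq_div_iff (ne_of_gt hsL)]
                field_simp
                nlinarith [hsq]
  -- Bernoulli
  have hbern : 1 - k * cTail L ≤ (1 - cTail L)^k := by
    have h := one_add_mul_le_pow (a := -cTail L) (by nlinarith [cTail_le_one L, (cTail_pos L).le]) k
    calc 1 - k * cTail L = 1 + k * (-cTail L) := by ring
      _ ≤ (1 + (- cTail L))^k := h
      _ = (1 - cTail L)^k := by ring_nf
  linarith [hsplit, hboxsum, hbad, hbern]

/-- for `k ≤ √L/16` we get `Pd ≥ 1/2` -/
lemma Pd_crit_half (k L : ℕ) (hk : 1 ≤ k) (hL : 1 ≤ L) (hkL : (k:ℝ) ≤ Real.sqrt L / 16) :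
    1/2 ≤ Pd 0 k L := by
  have hsL : (0:ℝ) < Real.sqrt L := Real.sqrt_pos.2 (by exact_mod_cast hL)
  have hsq : Real.sqrt L * Real.sqrt L = (L:ℝ) := Real.mul_self_sqrt (Nat.cast_nonneg L)
  have hsLL : Real.sqrt L ≤ L := by
    nlinarith [Real.sqrt_nonneg (L:ℝ), show (1:ℝ) ≤ L by exact_mod_cast hL]
  have h2k : 2*k ≤ L := by
    have : (2*k:ℝ) ≤ (L:ℝ) := by
      push_cast
      nlinarith
    exact_mod_cast this
  have hmain := Pd_crit_ge k L hk h2k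
  have hT : cTail L ≤ 1/Real.sqrt L := by
    rw [le_div_iff₀ hsL]; exact cTail_mul_sqrt_le L
  have hkT : (k:ℝ) * cTail L ≤ 1/16 := by
    have h1 : (k:ℝ) * cTail L ≤ (Real.sqrt L/16) * (1/Real.sqrt L) := by
      apply mul_le_mul hkL hT (cTail_pos L).le (by positivity)
    have h2 : (Real.sqrt L/16) * (1/Real.sqrt L) = 1/16 := by
      field_simp
    linarith
  have hk4 : 4*(k:ℝ)/Real.sqrt L ≤ 1/4 := by
    rw [div_le_iff₀ hsL]
    nlinarith
  linarith

-- series helpers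
lemma geom_sum_bound (r : ℝ) (h0 : 0 ≤ r) (h1 : r < 1) (n : ℕ) :
    ∑ k ∈ Finset.range n, r^k ≤ 1/(1-r) := by
  have h := geom_sum_mul r n  -- (∑ i ∈ range n, r ^ i) * (r - 1) = r ^ n - 1
  have h1r : (0:ℝ) < 1 - r := by linarith
  rw [le_div_iff₀ h1r]
  have hrn : 0 ≤ r^n := pow_nonneg h0 n
  nlinarith [h]

lemma pow_decay (a : ℝ) (h0 : 0 ≤ a) (h1 : a ≤ 1) (k : ℕ) : (1-a)^k * (1+k*a) ≤ 1 := by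
  induction k with
  | zero => norm_num
  | succ k ih =>
    have hpos : (0:ℝ) ≤ (1-a)^k := pow_nonneg (by linarith) k
    have hka : (0:ℝ) ≤ k*a := by positivity
    push_cast
    calc (1-a)^(k+1) * (1+((k:ℝ)+1)*a) = (1-a)^k * ((1-a)*(1+((k:ℝ)+1)*a)) := by rw [pow_succ]; ring
      _ ≤ (1-a)^k * (1+k*a) := by
          apply mul_le_mul_of_nonneg_left _ hpos
          push_cast
          nlinarith [sq_nonneg a]
      _ ≤ 1 := ih

lemma k_mul_pow_le (a : ℝ) (h0 : 0 < a) (h1 : a ≤ 1) (k : ℕ) : (k:ℝ) * (1-a)^k ≤ 1/a := by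
  have hd := pow_decay a h0.le h1 k
  have hpos : (0:ℝ) ≤ (1-a)^k := pow_nonneg (by linarith) k
  rw [le_div_iff₀ h0]
  nlinarith [Nat.cast_nonneg (α := ℝ) k]

lemma pow_sub_one_le (a : ℝ) (h0 : 0 ≤ a) (k : ℕ) : (1+a)^k - 1 ≤ k*a*(1+a)^k := by
  induction k with
  | zero => norm_num
  | succ k ih =>
    have h1 : (1:ℝ) ≤ (1+a)^(k+1) := one_le_pow₀ (by linarith)
    have h2 : (0:ℝ) ≤ (1+a)^k := by positivity
    calc (1+a)^(k+1) - 1 = ((1+a)^k - 1)*(1+a) + a := by rw [pow_succ]; ring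
      _ ≤ (k*a*(1+a)^k)*(1+a) + a := by nlinarith
      _ = k*a*(1+a)^(k+1) + a := by rw [pow_succ]; ring
      _ ≤ ((k:ℝ)+1)*a*(1+a)^(k+1) := by nlinarith
      _ = ((k+1:ℕ):ℝ)*a*(1+a)^(k+1) := by push_cast; ring


-- a Finset of ℕ that is "downward closed from 1" is an initial segment
lemma closed_eq_Icc (A : Finset ℕ) (h0 : ∀ k ∈ A, 1 ≤ k)
    (hdc : ∀ k ∈ A, ∀ j, 1 ≤ j → j ≤ k → j ∈ A) : A = Finset.Icc 1 A.card := by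
  ext k
  simp only [Finset.mem_Icc]
  constructor
  · intro hk
    refine ⟨h0 k hk, ?_⟩
    have hsub : Finset.Icc 1 k ⊆ A := by
      intro j hj
      rw [Finset.mem_Icc] at hj
      exact hdc k hk j hj.1 hj.2
    calc k = (Finset.Icc 1 k).card := by rw [Nat.card_Icc]; omega
      _ ≤ A.card := Finset.card_le_card hsub
  · rintro ⟨h1k, hkc⟩
    by_contra hk
    have hsub : A ⊆ Finset.Icc 1 (k-1) := by
      intro a ha
      rw [Finset.mem_Icc]
      refine ⟨h0 a ha, ?_⟩
      by_contra hak
      exact hk (hdc a ha k h1k (by omega))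
    have := Finset.card_le_card hsub
    rw [Nat.card_Icc] at this
    omega

lemma sum_odd (n : ℕ) : ∑ k ∈ Finset.Icc 1 n, (2*(k:ℝ)-1) = (n:ℝ)^2 := by
  induction n with
  | zero => simp
  | succ n ih =>
    rw [← Finset.Ico_add_one_right_eq_Icc, Finset.sum_Ico_succ_top (by omega), Finset.Ico_add_one_right_eq_Icc, ih]
    push_cast
    ring

variable {Ω : Type} [MeasurableSpace Ω]

lemma renCount_sq_eq (X : ℕ → Ω → ℕ) (L : ℕ) (ω : Ω) :
    ((renCount X L ω : ℝ))^2 = ∑ k ∈ Finset.Icc 1 L,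
      (if ∑ i ∈ Finset.range k, (2 * X i ω + 1) ≤ L then (2*(k:ℝ)-1) else 0) := by
  set A := (Finset.Icc 1 L).filter (fun k => ∑ i ∈ Finset.range k, (2 * X i ω + 1) ≤ L) with hA
  have hkle : ∀ k, k ≤ ∑ i ∈ Finset.range k, (2 * X i ω + 1) := by
    intro k
    calc k = ∑ _i ∈ Finset.range k, 1 := by simp
      _ ≤ ∑ i ∈ Finset.range k, (2 * X i ω + 1) := Finset.sum_le_sum (fun i _ => by omega)
  have hset : {k : ℕ | 1 ≤ k ∧ ∑ i ∈ Finset.range k, (2 * X i ω + 1) ≤ L} = ↑A := by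
    ext k
    simp only [hA, Finset.coe_filter, Set.mem_setOf_eq, Finset.mem_Icc]
    constructor
    · rintro ⟨h1, h2⟩
      exact ⟨⟨h1, le_trans (hkle k) h2⟩, h2⟩
    · rintro ⟨⟨h1, _⟩, h2⟩
      exact ⟨h1, h2⟩
  have hcount : renCount X L ω = A.card := by
    rw [renCount, hset, Set.ncard_coe_finset]
  have hdc : A = Finset.Icc 1 A.card := by
    apply closed_eq_Icc
    · intro k hk
      exact (Finset.mem_Icc.1 (Finset.mem_filter.1 hk).1).1
    · intro k hk j hj1 hjk
      rw [hA, Finset.mem_filter] at hk ⊢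
      obtain ⟨hk1, hk2⟩ := hk
      rw [Finset.mem_Icc] at hk1
      refine ⟨Finset.mem_Icc.2 ⟨hj1, le_trans hjk hk1.2⟩, ?_⟩
      calc ∑ i ∈ Finset.range j, (2 * X i ω + 1)
          ≤ ∑ i ∈ Finset.range k, (2 * X i ω + 1) := by
            apply Finset.sum_le_sum_of_subset (Finset.range_subset_range.2 hjk)
        _ ≤ L := hk2
  calc ((renCount X L ω : ℝ))^2 = ((A.card : ℕ):ℝ)^2 := by rw [hcount]
    _ = ∑ k ∈ Finset.Icc 1 A.card, (2*(k:ℝ)-1) := (sum_odd A.card).symm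
    _ = ∑ k ∈ A, (2*(k:ℝ)-1) := by rw [← hdc]
    _ = ∑ k ∈ Finset.Icc 1 L,
        (if ∑ i ∈ Finset.range k, (2 * X i ω + 1) ≤ L then (2*(k:ℝ)-1) else 0) := by
      rw [hA, Finset.sum_filter]

lemma measure_event (μ : MeasureTheory.Measure Ω) (δ : ℝ) (X : ℕ → Ω → ℕ)
    (h : IIDCat μ δ X) (hδ0 : 0 ≤ δ) (hδ1 : δ < 1/2) (L : ℕ) (hL : 1 ≤ L) (k : ℕ) :
    μ {ω | ∑ i ∈ Finset.range k, (2 * X i ω + 1) ≤ L} = ENNReal.ofReal (Pd δ k L) := by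
  obtain ⟨hprob, hmeas, hindep, hdist⟩ := h
  -- extension of a tuple
  classical
  set xext : (Fin k → ℕ) → ℕ → ℕ := fun x i => if h : i < k then x ⟨i, h⟩ else 0 with hxext
  set B : (Fin k → ℕ) → Set Ω := fun x => ⋂ i ∈ Finset.range k, (X i)⁻¹' {xext x i} with hB
  have hEk : {ω | ∑ i ∈ Finset.range k, (2 * X i ω + 1) ≤ L} = ⋃ x ∈ tupSet k L, B x := by
    ext ω
    simp only [Set.mem_setOf_eq, Set.mem_iUnion, exists_prop]
    constructor
    · intro hω
      refine ⟨fun i => X i ω, ?_, ?_⟩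
      · rw [tupSet, Finset.mem_filter]
        constructor
        · rw [Fintype.mem_piFinset]
          intro i
          rw [Finset.mem_range]
          have h1 : 2 * X i.val ω + 1 ≤ ∑ j ∈ Finset.range k, (2 * X j ω + 1) :=
            Finset.single_le_sum (f := fun j => 2 * X j ω + 1)
              (fun j _ => Nat.zero_le _) (Finset.mem_range.2 i.isLt)
          omega
        · rw [Fin.sum_univ_eq_sum_range (fun i => 2 * X i ω + 1) k]
          exact hω
      · rw [hB]
        simp only [Set.mem_iInter, Set.mem_preimage, Set.mem_singleton_iff]
        intro i hi
        rw [Finset.mem_range] at hi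
        rw [hxext]
        simp only [hi, dif_pos]
    · rintro ⟨x, hx, hω⟩
      rw [hB] at hω
      simp only [Set.mem_iInter, Set.mem_preimage, Set.mem_singleton_iff] at hω
      have hXx : ∀ i ∈ Finset.range k, 2 * X i ω + 1 = 2 * xext x i + 1 := by
        intro i hi
        rw [hω i hi]
      rw [Finset.sum_congr rfl hXx]
      have heq : ∑ i ∈ Finset.range k, (2 * xext x i + 1) = ∑ i : Fin k, (2 * x i + 1) := by
        rw [← Fin.sum_univ_eq_sum_range (fun i => 2 * xext x i + 1) k]
        apply Finset.sum_congr rfl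
        intro i _
        rw [hxext]
        simp [i.isLt]
      rw [heq]
      exact (Finset.mem_filter.1 hx).2
  have hBmeas : ∀ x : Fin k → ℕ, MeasurableSet (B x) := by
    intro x
    apply MeasurableSet.biInter (Set.to_countable _)
    intro i _
    exact hmeas i (MeasurableSet.of_discrete)
  have hBdisj : (↑(tupSet k L) : Set (Fin k → ℕ)).PairwiseDisjoint B := by
    intro x hx y hy hxy
    apply Set.disjoint_left.2
    intro ω hωx hωy
    rw [hB] at hωx hωy
    simp only [Set.mem_iInter, Set.mem_preimage, Set.mem_singleton_iff] at hωx hωy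
    apply hxy
    funext i
    have h1 := hωx i (Finset.mem_range.2 i.isLt)
    have h2 := hωy i (Finset.mem_range.2 i.isLt)
    have : xext x i.val = xext y i.val := by rw [← h1, h2]
    rw [hxext] at this
    simpa [i.isLt] using this
  have hBmeasure : ∀ x ∈ tupSet k L, μ (B x) = ENNReal.ofReal (∏ i, catMass (1/2-δ) (x i)) := by
    intro x _
    have hind := hindep.measure_inter_preimage_eq_mul (S := Finset.range k)
      (sets := fun i => {xext x i}) (fun i _ => MeasurableSet.of_discrete)
    rw [hB, hind]
    have hterm : ∀ i ∈ Finset.range k, μ (X i ⁻¹' {xext x i})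
        = ENNReal.ofReal (catMass (1/2-δ) (xext x i)) := by
      intro i _
      rw [show X i ⁻¹' {xext x i} = {ω | X i ω = xext x i} from rfl]
      exact hdist i (xext x i)
    rw [Finset.prod_congr rfl hterm]
    rw [← ENNReal.ofReal_prod_of_nonneg
      (fun i _ => catMass_nonneg (by linarith) (by linarith) (xext x i))]
    congr 1
    rw [← Fin.prod_univ_eq_prod_range (fun i => catMass (1/2-δ) (xext x i)) k]
    apply Finset.prod_congr rfl
    intro i _
    rw [hxext]
    simp [i.isLt]
  rw [hEk, measure_biUnion_finset hBdisj (fun x _ => hBmeas x)]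
  rw [Finset.sum_congr rfl hBmeasure]
  rw [← ENNReal.ofReal_sum_of_nonneg]
  · rfl
  · intro x _
    exact Finset.prod_nonneg (fun i _ => catMass_nonneg (by linarith) (by linarith) _)

lemma moment_eq (μ : MeasureTheory.Measure Ω) (δ : ℝ) (X : ℕ → Ω → ℕ)
    (h : IIDCat μ δ X) (hδ0 : 0 ≤ δ) (hδ1 : δ < 1/2) (L : ℕ) (hL : 1 ≤ L) :
    ∫ ω, ((renCount X L ω : ℝ))^2 ∂μ = ∑ k ∈ Finset.Icc 1 L, (2*(k:ℝ)-1) * Pd δ k L := by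
  obtain ⟨hprob, hmeas, hindep, hdist⟩ := h
  have hSmeas : ∀ k, Measurable (fun ω => ∑ i ∈ Finset.range k, (2 * X i ω + 1)) := by
    intro k
    apply Finset.measurable_sum
    intro i _
    exact ((hmeas i).const_mul 2).add_const 1
  have hEmeas : ∀ k, MeasurableSet {ω | ∑ i ∈ Finset.range k, (2 * X i ω + 1) ≤ L} := by
    intro k
    exact (hSmeas k) (MeasurableSet.of_discrete : MeasurableSet (Set.Iic L))
  have hpoint : (fun ω => ((renCount X L ω : ℝ))^2)
      = fun ω => ∑ k ∈ Finset.Icc 1 L,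
        Set.indicator {ω' | ∑ i ∈ Finset.range k, (2 * X i ω' + 1) ≤ L}
          (fun _ => (2*(k:ℝ)-1)) ω := by
    funext ω
    rw [renCount_sq_eq]
    apply Finset.sum_congr rfl
    intro k _
    rw [Set.indicator_apply]
    rfl
  rw [hpoint, integral_finset_sum]
  · apply Finset.sum_congr rfl
    intro k hk
    rw [MeasureTheory.integral_indicator_const _ (hEmeas k)]
    rw [measureReal_def, measure_event μ δ X ⟨hprob, hmeas, hindep, hdist⟩ hδ0 hδ1 L hL k]
    rw [ENNReal.toReal_ofReal]
    · rw [smul_eq_mul, mul_comm]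
    · apply Finset.sum_nonneg
      intro x _
      exact Finset.prod_nonneg (fun i _ => catMass_nonneg (by linarith) (by linarith) _)
  · intro k _
    exact (integrable_const _).indicator (hEmeas k)


lemma num_bound (L : ℕ) (hL : 1 ≤ L) (δ : ℝ) (hδ0 : 0 ≤ δ) (hδ1 : δ < 1/2)
    (hδT : 2*δ ≤ cTail L / 2) :
    ∑ k ∈ Finset.Icc 1 L, (2*(k:ℝ)-1) * (((1+2*δ)^k - 1) * Pd 0 k L)
      ≤ 16384 * δ * L * Real.sqrt L := by
  set T := cTail L with hT
  have hT0 : 0 < T := cTail_pos L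
  have hT1 : T ≤ 1 := cTail_le_one L
  have hTs : 1 ≤ 2 * T * Real.sqrt L := one_le_two_cTail_mul_sqrt L hL
  have hPle : ∀ k, Pd 0 k L ≤ (1-T)^k := fun k => Pd_crit_le k L
  clear_value T
  obtain ⟨c, hc⟩ : ∃ c : ℝ, c = T/2 := ⟨_, rfl⟩
  rw [← hc] at hδT
  obtain ⟨ν, hν⟩ : ∃ x : ℝ, x = 1 - c/4 := ⟨1 - c/4, rfl⟩
  have hc0 : 0 < c := by rw [hc]; linarith
  have hc1 : c ≤ 1/2 := by rw [hc]; linarith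
  have hν0 : 0 < ν := by rw [hν]; linarith
  have hν1 : ν < 1 := by rw [hν]; linarith
  have hsL : (0:ℝ) < Real.sqrt L := Real.sqrt_pos.2 (by exact_mod_cast hL)
  have hsq : Real.sqrt L * Real.sqrt L = (L:ℝ) := Real.mul_self_sqrt (Nat.cast_nonneg L)
  have hinv : 1/c ≤ 4*Real.sqrt L := by
    rw [div_le_iff₀ hc0]
    rw [hc]
    nlinarith
  have hkν : ∀ k : ℕ, (k:ℝ) * ν^k ≤ 4/c := by
    intro k
    have := k_mul_pow_le (c/4) (by linarith) (by linarith) k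
    rw [← hν] at this
    calc (k:ℝ) * ν^k ≤ 1/(c/4) := this
      _ = 4/c := by rw [div_div_eq_mul_div]; ring_nf
  -- γ bound
  obtain ⟨γ, hγ⟩ : ∃ x : ℝ, x = (1+2*δ)*(1-T) := ⟨(1+2*δ)*(1-T), rfl⟩
  have hγ0 : 0 ≤ γ := by rw [hγ]; nlinarith
  have hγν : γ ≤ ν^4 := by
    have hA : γ ≤ 1 - T/2 := by
      rw [hγ]; nlinarith
    have hB : 1 - T/2 ≤ ν^4 := by
      rw [hν, hc]
      nlinarith [mul_nonneg (sq_nonneg (T/8)) (sq_nonneg (T/8-2)), sq_nonneg (T/8)]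
    exact le_trans hA hB
  have hterm : ∀ k ∈ Finset.Icc 1 L,
      (2*(k:ℝ)-1) * (((1+2*δ)^k - 1) * Pd 0 k L) ≤ (64*δ/c^2) * (ν^2)^k := by
    intro k hk
    rw [Finset.mem_Icc] at hk
    have hk1 : (1:ℝ) ≤ k := by exact_mod_cast hk.1
    have hP1 : Pd 0 k L ≤ (1-T)^k := hPle k
    have hP0 : 0 ≤ Pd 0 k L := Pd_zero_nonneg k L
    have h1T0 : (0:ℝ) ≤ 1 - T := by linarith
    have hpow1 : (1:ℝ) ≤ (1+2*δ)^k := one_le_pow₀ (by linarith)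
    have hgr : (1+2*δ)^k - 1 ≤ 2*δ*k*(1+2*δ)^k := by
      have := pow_sub_one_le (2*δ) (by linarith) k
      calc (1+2*δ)^k - 1 ≤ k*(2*δ)*(1+2*δ)^k := this
        _ = 2*δ*k*(1+2*δ)^k := by ring
    have step1 : (2*(k:ℝ)-1) * (((1+2*δ)^k - 1) * Pd 0 k L)
        ≤ (2*k) * ((2*δ*k*(1+2*δ)^k) * (1-T)^k) := by
      have e1 : ((1+2*δ)^k - 1) * Pd 0 k L ≤ (2*δ*k*(1+2*δ)^k) * (1-T)^k := by
        apply mul_le_mul hgr hP1 hP0 (by positivity)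
      have e2 : 0 ≤ ((1+2*δ)^k - 1) * Pd 0 k L := by
        apply mul_nonneg (by linarith) hP0
      nlinarith
    have step2 : (2*(k:ℝ)) * ((2*δ*k*(1+2*δ)^k) * (1-T)^k) = 4*δ*(k:ℝ)^2*γ^k := by
      rw [hγ, mul_pow]
      ring
    have step3 : 4*δ*(k:ℝ)^2*γ^k ≤ (64*δ/c^2) * (ν^2)^k := by
      have hγk : γ^k ≤ (ν^4)^k := pow_le_pow_left₀ hγ0 hγν k
      have hsplit : ((ν:ℝ)^4)^k = (ν^k)^2 * (ν^2)^k := by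
        rw [← pow_mul, ← pow_mul, ← pow_mul, ← pow_add]
        congr 1
        ring
      have hkν2 : ((k:ℝ) * ν^k)^2 ≤ (4/c)^2 := by
        have h := hkν k
        have hnn : 0 ≤ (k:ℝ) * ν^k := by positivity
        nlinarith
      have hν2k : (0:ℝ) ≤ (ν^2)^k := by positivity
      have e3 : (k:ℝ)^2 * γ^k ≤ (16/c^2) * (ν^2)^k := by
        calc (k:ℝ)^2 * γ^k ≤ (k:ℝ)^2 * ((ν^4)^k) := by
              apply mul_le_mul_of_nonneg_left hγk (by positivity)
          _ = ((k:ℝ) * ν^k)^2 * (ν^2)^k := by rw [hsplit]; ring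
          _ ≤ (4/c)^2 * (ν^2)^k := by
              apply mul_le_mul_of_nonneg_right hkν2 hν2k
          _ = (16/c^2) * (ν^2)^k := by rw [div_pow]; norm_num
      calc 4*δ*(k:ℝ)^2*γ^k = 4*δ*((k:ℝ)^2*γ^k) := by ring
        _ ≤ 4*δ*((16/c^2) * (ν^2)^k) := by
            apply mul_le_mul_of_nonneg_left e3 (by linarith)
        _ = (64*δ/c^2) * (ν^2)^k := by ring
    linarith
  have hsum : ∑ k ∈ Finset.Icc 1 L, (64*δ/c^2) * (ν^2)^k
      ≤ (64*δ/c^2) * (4/c) := by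
    rw [← Finset.mul_sum]
    apply mul_le_mul_of_nonneg_left _ (by positivity)
    have hsub : Finset.Icc 1 L ⊆ Finset.range (L+1) := by
      intro k hk
      rw [Finset.mem_Icc] at hk
      rw [Finset.mem_range]
      omega
    have hν2 : ν^2 < 1 := by nlinarith
    calc ∑ k ∈ Finset.Icc 1 L, (ν^2)^k
        ≤ ∑ k ∈ Finset.range (L+1), (ν^2)^k := by
          apply Finset.sum_le_sum_of_subset_of_nonneg hsub
          intro k _ _
          positivity
      _ ≤ 1/(1-ν^2) := geom_sum_bound (ν^2) (by positivity) hν2 (L+1)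
      _ ≤ 4/c := by
          have h1 : c/4 ≤ 1 - ν^2 := by rw [hν]; nlinarith
          rw [div_le_div_iff₀ (by nlinarith) hc0]
          nlinarith
  have htotal : ∑ k ∈ Finset.Icc 1 L, (2*(k:ℝ)-1) * (((1+2*δ)^k - 1) * Pd 0 k L)
      ≤ (64*δ/c^2) * (4/c) := le_trans (Finset.sum_le_sum hterm) hsum
  have hfinal : (64*δ/c^2) * (4/c) ≤ 16384 * δ * L * Real.sqrt L := by
    have e1 : (64*δ/c^2) * (4/c) = 256*δ*(1/c)^3 := by
      field_simp
      ring
    rw [e1]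
    have h2 : (1/c)^3 ≤ (4*Real.sqrt L)^3 := by
      apply pow_le_pow_left₀ (by positivity) hinv
    calc 256*δ*(1/c)^3 ≤ 256*δ*(4*Real.sqrt L)^3 := by
          apply mul_le_mul_of_nonneg_left h2 (by linarith)
      _ = 16384*δ*(Real.sqrt L * Real.sqrt L * Real.sqrt L) := by ring
      _ = 16384 * δ * L * Real.sqrt L := by rw [hsq]; ring
  linarith

lemma den_bound (L : ℕ) (hL : 1 ≤ L) :
    (L:ℝ)/4096 ≤ ∑ k ∈ Finset.Icc 1 L, (2*(k:ℝ)-1) * Pd 0 k L := by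
  have hterm_nonneg : ∀ k ∈ Finset.Icc 1 L, 0 ≤ (2*(k:ℝ)-1) * Pd 0 k L := by
    intro k hk
    rw [Finset.mem_Icc] at hk
    have : (1:ℝ) ≤ k := by exact_mod_cast hk.1
    exact mul_nonneg (by linarith) (Pd_zero_nonneg k L)
  rcases lt_or_ge L 2048 with hsmall | hbig
  · -- small L : use the k = 1 term
    have h1 : (2*((1:ℕ):ℝ)-1) * Pd 0 1 L ≤ ∑ k ∈ Finset.Icc 1 L, (2*(k:ℝ)-1) * Pd 0 k L :=
      Finset.single_le_sum hterm_nonneg (Finset.mem_Icc.2 ⟨le_refl 1, hL⟩)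
    have h2 : (1:ℝ)/2 ≤ (2*((1:ℕ):ℝ)-1) * Pd 0 1 L := by
      have := Pd_one_ge L hL
      push_cast
      linarith
    have h3 : (L:ℝ)/4096 ≤ 1/2 := by
      have : (L:ℝ) ≤ 2048 := by exact_mod_cast hsmall.le
      linarith
    norm_num at h1 h2
    linarith
  · -- large L
    set K := Nat.sqrt L / 16 with hK
    have hL0 : (0:ℝ) < L := by positivity
    have hsL : (0:ℝ) < Real.sqrt L := Real.sqrt_pos.2 hL0
    have hsq : Real.sqrt L * Real.sqrt L = (L:ℝ) := Real.mul_self_sqrt (Nat.cast_nonneg L)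
    have hns_le : ((Nat.sqrt L : ℕ):ℝ) ≤ Real.sqrt L := by
      apply Real.le_sqrt_of_sq_le
      have h := Nat.sqrt_le' L
      have h' : ((Nat.sqrt L:ℕ):ℝ)^2 ≤ (L:ℝ) := by exact_mod_cast h
      nlinarith
    have hns_ge : Real.sqrt L - 1 ≤ ((Nat.sqrt L : ℕ):ℝ) := by
      have h1 : (L:ℝ) ≤ (((Nat.sqrt L : ℕ):ℝ)+1)^2 := by
        have hnat : L < (Nat.sqrt L + 1)^2 := Nat.lt_succ_sqrt' L
        have h2 : (L:ℝ) < (((Nat.sqrt L:ℕ):ℝ)+1)^2 := by exact_mod_cast hnat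
        nlinarith
      have h2 : Real.sqrt L ≤ ((Nat.sqrt L:ℕ):ℝ)+1 := by
        calc Real.sqrt L ≤ Real.sqrt ((((Nat.sqrt L:ℕ):ℝ)+1)^2) := Real.sqrt_le_sqrt h1
          _ = ((Nat.sqrt L:ℕ):ℝ)+1 := Real.sqrt_sq (by positivity)
      linarith
    have hsL32 : 32 ≤ Real.sqrt L := by
      have : ((32:ℝ))^2 ≤ (L:ℝ) := by
        have : (2048:ℝ) ≤ L := by exact_mod_cast hbig
        nlinarith
      calc (32:ℝ) = Real.sqrt (32^2) := (Real.sqrt_sq (by norm_num)).symm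
        _ ≤ Real.sqrt L := Real.sqrt_le_sqrt this
    have hK16 : ((K:ℕ):ℝ) * 16 ≤ ((Nat.sqrt L : ℕ):ℝ) := by
      have := Nat.div_mul_le_self (Nat.sqrt L) 16
      exact_mod_cast this
    have hKup : ((K:ℕ):ℝ) ≤ Real.sqrt L / 16 := by
      rw [le_div_iff₀ (by norm_num : (0:ℝ) < 16)]
      linarith
    have hKlow : Real.sqrt L / 32 ≤ ((K:ℕ):ℝ) := by
      have h1 : ((Nat.sqrt L:ℕ):ℝ) ≤ ((K:ℕ):ℝ) * 16 + 15 := by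
        have hnat : Nat.sqrt L ≤ (Nat.sqrt L / 16) * 16 + 15 := by omega
        rw [hK]
        exact_mod_cast hnat
      -- √L - 16 ≤ 16 K and √L/2 ≤ √L - 16 since √L ≥ 32
      nlinarith
    have hK1 : 1 ≤ K := by
      have : (1:ℝ) ≤ ((K:ℕ):ℝ) := by nlinarith
      exact_mod_cast this
    have hKL : K ≤ L := le_trans (Nat.div_le_self _ _) (Nat.sqrt_le_self L)
    have hsub : Finset.Icc 1 K ⊆ Finset.Icc 1 L := Finset.Icc_subset_Icc le_rfl hKL
    have hhalf : ∀ k ∈ Finset.Icc 1 K, (1/2 : ℝ) * (2*(k:ℝ)-1) ≤ (2*(k:ℝ)-1) * Pd 0 k L := by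
      intro k hk
      rw [Finset.mem_Icc] at hk
      have hk1 : (1:ℝ) ≤ (k:ℝ) := by exact_mod_cast hk.1
      have hkK : (k:ℝ) ≤ ((K:ℕ):ℝ) := by exact_mod_cast hk.2
      have hP := Pd_crit_half k L hk.1 hL (by linarith)
      nlinarith
    calc (L:ℝ)/4096 ≤ (1/2) * ((((K:ℕ):ℝ))^2) := by nlinarith
      _ = (1/2) * ∑ k ∈ Finset.Icc 1 K, (2*(k:ℝ)-1) := by rw [sum_odd]
      _ = ∑ k ∈ Finset.Icc 1 K, (1/2 : ℝ) * (2*(k:ℝ)-1) := by rw [Finset.mul_sum]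
      _ ≤ ∑ k ∈ Finset.Icc 1 K, (2*(k:ℝ)-1) * Pd 0 k L := Finset.sum_le_sum hhalf
      _ ≤ ∑ k ∈ Finset.Icc 1 L, (2*(k:ℝ)-1) * Pd 0 k L := by
          apply Finset.sum_le_sum_of_subset_of_nonneg hsub
          intro k hk _
          exact hterm_nonneg k hk


/-- **Second-moment comparison for `L ≪ δ^(-2)`.** For every `ε > 0` there are
`δ₀ > 0` and `s > 0` such that for all `δ ∈ (0, δ₀)` and all integers
`1 ≤ L ≤ s δ^(-2)`, `|E(N̂^δ(L)²) / E(N̂⁰(L)²) - 1| < ε`. -/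
theorem renewal_second_moment_comparison :
    ∀ ε : ℝ, 0 < ε → ∃ δ₀ : ℝ, 0 < δ₀ ∧ ∃ s : ℝ, 0 < s ∧
      ∀ δ : ℝ, 0 < δ → δ < δ₀ → δ < 1/2 →
        ∀ (Ω₁ : Type) [MeasurableSpace Ω₁],
          ∀ (μ₁ : MeasureTheory.Measure Ω₁) (X : ℕ → Ω₁ → ℕ), IIDCat μ₁ δ X →
        ∀ (Ω₂ : Type) [MeasurableSpace Ω₂],
          ∀ (μ₂ : MeasureTheory.Measure Ω₂) (X₀ : ℕ → Ω₂ → ℕ), IIDCat μ₂ 0 X₀ →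
        ∀ L : ℕ, 1 ≤ L → (L : ℝ) ≤ s * δ ^ (-(2 : ℝ)) →
          |(∫ ω, ((renCount X L ω : ℝ)) ^ 2 ∂μ₁) /
            (∫ ω, ((renCount X₀ L ω : ℝ)) ^ 2 ∂μ₂) - 1| < ε := by
  intro ε hε
  refine ⟨1/2, by norm_num, ?_⟩
  set s : ℝ := min ((1/16:ℝ)^2) (min (ε/8) ((ε/2^27)^2)) with hs
  have hs0 : 0 < s := by
    apply lt_min (by norm_num)
    apply lt_min (by linarith) (by positivity)
  refine ⟨s, hs0, ?_⟩
  intro δ hδ0 hδhalf' hδhalf Ω₁ _ μ₁ X h₁ Ω₂ _ μ₂ X₀ h₂ L hL hLs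
  have hm1 := moment_eq μ₁ δ X h₁ hδ0.le hδhalf L hL
  have hm2 := moment_eq μ₂ 0 X₀ h₂ le_rfl (by norm_num) L hL
  set D := ∑ k ∈ Finset.Icc 1 L, (2*(k:ℝ)-1) * Pd 0 k L with hD
  set N := ∑ k ∈ Finset.Icc 1 L, (2*(k:ℝ)-1) * Pd δ k L with hN
  have hL0 : (0:ℝ) < L := by exact_mod_cast hL
  have hDlow : (L:ℝ)/4096 ≤ D := den_bound L hL
  have hD0 : 0 < D := lt_of_lt_of_le (by positivity) hDlow
  have hsL : (0:ℝ) < Real.sqrt L := Real.sqrt_pos.2 hL0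
  have hsqL : Real.sqrt L * Real.sqrt L = (L:ℝ) := Real.mul_self_sqrt (Nat.cast_nonneg L)
  -- translate the rpow condition
  have hδ2L : δ^2 * L ≤ s := by
    have hrpow : δ ^ (-(2:ℝ)) = (δ^2)⁻¹ := by
      rw [Real.rpow_neg hδ0.le]
      congr 1
      rw [show ((2:ℝ)) = ((2:ℕ):ℝ) by norm_num, Real.rpow_natCast]
    rw [hrpow] at hLs
    have hδ2 : 0 < δ^2 := by positivity
    calc δ^2 * L ≤ δ^2 * (s * (δ^2)⁻¹) := by
          apply mul_le_mul_of_nonneg_left hLs (by positivity)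
      _ = s := by field_simp
  have hδsL : δ * Real.sqrt L ≤ Real.sqrt s := by
    apply Real.le_sqrt_of_sq_le
    rw [mul_pow, Real.sq_sqrt (Nat.cast_nonneg L)]
    linarith
  have hss1 : Real.sqrt s ≤ 1/16 := by
    calc Real.sqrt s ≤ Real.sqrt ((1/16:ℝ)^2) := Real.sqrt_le_sqrt (min_le_left _ _)
      _ = 1/16 := Real.sqrt_sq (by norm_num)
  have hss2 : Real.sqrt s ≤ ε/2^27 := by
    calc Real.sqrt s ≤ Real.sqrt ((ε/2^27:ℝ)^2) :=
          Real.sqrt_le_sqrt (le_trans (min_le_right _ _) (min_le_right _ _))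
      _ = ε/2^27 := Real.sqrt_sq (by positivity)
  have hse : s ≤ ε/8 := le_trans (min_le_right _ _) (min_le_left _ _)
  -- (b) condition for num_bound
  have hδc : 2*δ ≤ cTail L / 2 := by
    have h1 := one_le_two_cTail_mul_sqrt L hL
    have h2 : 2*δ*Real.sqrt L ≤ 1/8 := by nlinarith
    nlinarith [mul_pos hsL hsL]
  -- (a) upper bound on N
  have hup : N ≤ D + ∑ k ∈ Finset.Icc 1 L, (2*(k:ℝ)-1) * (((1+2*δ)^k - 1) * Pd 0 k L) := by
    rw [hN, hD, ← Finset.sum_add_distrib]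
    apply Finset.sum_le_sum
    intro k hk
    rw [Finset.mem_Icc] at hk
    have hk1 : (1:ℝ) ≤ k := by exact_mod_cast hk.1
    have h := Pd_le δ hδ0.le hδhalf k L
    have hnn : (0:ℝ) ≤ 2*(k:ℝ)-1 := by linarith
    nlinarith [Pd_zero_nonneg k L]
  have hNum := num_bound L hL δ hδ0.le hδhalf hδc
  have hNumD : 16384 * δ * L * Real.sqrt L ≤ (ε/2) * D := by
    have e1 : 16384 * δ * (L:ℝ) * Real.sqrt L = 16384 * (δ * Real.sqrt L) * L := by ring
    have e2 : 16384 * (δ * Real.sqrt L) * (L:ℝ) ≤ 16384 * Real.sqrt s * L := by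
      have : (0:ℝ) ≤ 16384 * (L:ℝ) := by positivity
      nlinarith
    have e3 : 16384 * Real.sqrt s * (L:ℝ) ≤ (ε/2) * ((L:ℝ)/4096) := by
      have h27 : (2:ℝ)^27 = 134217728 := by norm_num
      have : Real.sqrt s * 134217728 ≤ ε := by
        rw [← h27]
        have h2pos : (0:ℝ) < 2^27 := by positivity
        calc Real.sqrt s * 2^27 ≤ (ε/2^27) * 2^27 := by nlinarith
          _ = ε := by field_simp
      nlinarith [Real.sqrt_nonneg s]
    have e4 : (ε/2) * ((L:ℝ)/4096) ≤ (ε/2) * D := by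
      apply mul_le_mul_of_nonneg_left hDlow (by linarith)
    calc 16384 * δ * (L:ℝ) * Real.sqrt L = 16384 * (δ * Real.sqrt L) * L := e1
      _ ≤ 16384 * Real.sqrt s * L := e2
      _ ≤ (ε/2) * ((L:ℝ)/4096) := e3
      _ ≤ (ε/2) * D := e4
  have hupper : N - D ≤ (ε/2) * D := by
    have := le_trans hNum hNumD
    linarith
  -- (d) lower bound on N
  have hlow : D - (ε/2) * D ≤ N := by
    have h1 : (1-4*δ^2)^L * D ≤ N := by
      rw [hN, hD, Finset.mul_sum]
      apply Finset.sum_le_sum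
      intro k hk
      rw [Finset.mem_Icc] at hk
      have hk1 : (1:ℝ) ≤ k := by exact_mod_cast hk.1
      have h := Pd_ge δ hδ0.le hδhalf k L
      have hnn : (0:ℝ) ≤ 2*(k:ℝ)-1 := by linarith
      nlinarith [Pd_zero_nonneg k L]
    have h2 : 1 - 4*(δ^2*L) ≤ (1-4*δ^2)^L := by
      have hb := one_add_mul_le_pow (a := -(4*δ^2)) (by nlinarith) L
      calc 1 - 4*(δ^2*(L:ℝ)) = 1 + (L:ℝ) * (-(4*δ^2)) := by ring
        _ ≤ (1 + -(4*δ^2))^L := hb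
        _ = (1-4*δ^2)^L := by ring_nf
    have h3 : 1 - ε/2 ≤ (1-4*δ^2)^L := by
      have : 4*(δ^2*(L:ℝ)) ≤ 4*s := by linarith
      have : 4*s ≤ ε/2 := by linarith
      linarith
    nlinarith
  -- conclusion
  rw [hm1, hm2]
  have hfrac : N/D - 1 = (N - D)/D := by field_simp
  rw [hfrac, abs_div, abs_of_pos hD0, div_lt_iff₀ hD0]
  have habs : |N - D| ≤ (ε/2) * D := by
    rw [abs_le]
    constructor <;> linarith
  have : (ε/2) * D < ε * D := by nlinarith
  linarith
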